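/- arXiv:2508.17791 — 2 statements merged into one kernel-verified Lean document; each statement's English description precedes it below -/
import Mathlib

section
/- (Proposition 1) If there exist positive constants δ and ε such that Q(δ, E_X×E_Y | x,y,a,b) ≤ 1 − ε for all (x,y,a,b) ∈ 𝕂, then for every horizon T ∈ ℝ₊, every initial triple (t,x,μ) ∈ ℝ₊ × E_X × P(E_Y×ℝ), and every pair of admissible policies (π¹,π²) ∈ Π¹ × Π², one has P^{π¹,π²}_{(t,x,μ)}(S_∞ > T) = 1, where S_∞ := lim_n S_n; that is, Assumption 1 holds. -/
/-!
Common framework for finite-horizon partially observable semi-Markov games (POSMGs)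
with risk probability criteria, following Wen, Xia, Yu (2025).
-/

open MeasureTheory ProbabilityTheory ENNReal Filter Set

namespace POSMG

variable {EX EY Act1 Act2 : Type*} [MeasurableSpace EX] [MeasurableSpace EY]
  [MeasurableSpace Act1] [MeasurableSpace Act2]

/-- Canonical sample space: sequences of tuples `(θₙ, tₙ, xₙ, yₙ, λₙ, aₙ, bₙ)`. -/
abbrev Omega (EX EY Act1 Act2 : Type*) : Type _ :=
  ℕ → ℝ × ℝ × EX × EY × ℝ × Act1 × Act2

/-- sojourn time `Θₙ` -/
def Θv (ω : Omega EX EY Act1 Act2) (n : ℕ) : ℝ := (ω n).1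
/-- remaining horizon `Tₙ` -/
def Tv (ω : Omega EX EY Act1 Act2) (n : ℕ) : ℝ := (ω n).2.1
/-- observable state `Xₙ` -/
def Xv (ω : Omega EX EY Act1 Act2) (n : ℕ) : EX := (ω n).2.2.1
/-- unobservable state `Yₙ` -/
def Yv (ω : Omega EX EY Act1 Act2) (n : ℕ) : EY := (ω n).2.2.2.1
/-- remaining goal `Λₙ` -/
def Λv (ω : Omega EX EY Act1 Act2) (n : ℕ) : ℝ := (ω n).2.2.2.2.1
/-- action of player 1, `Aₙ` -/
def Av (ω : Omega EX EY Act1 Act2) (n : ℕ) : Act1 := (ω n).2.2.2.2.2.1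
/-- action of player 2, `Bₙ` -/
def Bv (ω : Omega EX EY Act1 Act2) (n : ℕ) : Act2 := (ω n).2.2.2.2.2.2

/-- decision epochs `Sₙ = θ₀ + θ₁ + ⋯ + θₙ` (with `θ₀ = 0` a.s.). -/
def Sv (ω : Omega EX EY Act1 Act2) (n : ℕ) : ℝ := ∑ i ∈ Finset.range (n + 1), Θv ω i

/-- observable history `iₙ = (θ₀,t₀,x₀,a₀,b₀,…,θₙ,tₙ,xₙ)` -/
abbrev ObsHist (EX Act1 Act2 : Type*) (n : ℕ) : Type _ :=
  (Fin (n + 1) → ℝ × ℝ × EX) × (Fin n → Act1 × Act2)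

/-- full history `hₙ = (θ₀,t₀,x₀,y₀,λ₀,a₀,b₀,…,θₙ,tₙ,xₙ,yₙ,λₙ)` -/
abbrev FullHist (EX EY Act1 Act2 : Type*) (n : ℕ) : Type _ :=
  (Fin (n + 1) → ℝ × ℝ × EX × EY × ℝ) × (Fin n → Act1 × Act2)

/-- the observable history random variable -/
def obsHist (ω : Omega EX EY Act1 Act2) (n : ℕ) : ObsHist EX Act1 Act2 n :=
  (fun k => (Θv ω k, Tv ω k, Xv ω k), fun k => (Av ω k, Bv ω k))

/-- the full history random variable -/
def fullHist (ω : Omega EX EY Act1 Act2) (n : ℕ) : FullHist EX EY Act1 Act2 n :=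
  (fun k => (Θv ω k, Tv ω k, Xv ω k, Yv ω k, Λv ω k), fun k => (Av ω k, Bv ω k))

/-- `tₙ` read off an observable history -/
def ObsHist.tn {n : ℕ} (i : ObsHist EX Act1 Act2 n) : ℝ := (i.1 (Fin.last n)).2.1
/-- `xₙ` read off an observable history -/
def ObsHist.xn {n : ℕ} (i : ObsHist EX Act1 Act2 n) : EX := (i.1 (Fin.last n)).2.2

/-- a mixed action on the finite set `s` (element of `P(A(x))`) -/
def IsMixed {α : Type*} (s : Finset α) (w : α → ℝ) : Prop :=
  (∀ a, 0 ≤ w a) ∧ (∀ a ∉ s, w a = 0) ∧ (∑ a ∈ s, w a = 1)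

/-- the set of mixed actions on `s`, i.e. `P(A(x))` -/
abbrev Mixed {α : Type*} (s : Finset α) : Type _ := {w : α → ℝ // IsMixed s w}

/-- admissible (history-dependent) policies of player 1: stochastic kernels on `A`
given the initial joint distribution and the observable history -/
abbrev Pol1 (EX EY Act1 Act2 : Type*) [MeasurableSpace EY] [MeasurableSpace Act1] : Type _ :=
  (n : ℕ) → Measure (EY × ℝ) → ObsHist EX Act1 Act2 n → Measure Act1

/-- admissible (history-dependent) policies of player 2 -/
abbrev Pol2 (EX EY Act1 Act2 : Type*) [MeasurableSpace EY] [MeasurableSpace Act2] : Type _ :=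
  (n : ℕ) → Measure (EY × ℝ) → ObsHist EX Act1 Act2 n → Measure Act2

/-- a Markov decision rule: a stochastic kernel on the finite action set given
`(t, x, μ) ∈ ℝ₊ × E_X × P(E_Y × ℝ)`, written as a weight function -/
abbrev MKer (EX EY α : Type*) [MeasurableSpace EY] : Type _ :=
  ℝ → EX → Measure (EY × ℝ) → α → ℝ

/-- the k-shift of a sequence (shifted policy `⁽ᵏ⁾π`) -/
def shift {α : Type*} (k : ℕ) (φ : ℕ → α) : ℕ → α := fun n => φ (k + n)

/-- the probability measure on a finite action set induced by a weight function -/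
noncomputable def weightsMeasure {α : Type*} [MeasurableSpace α] (s : Finset α) (w : α → ℝ) :
    Measure α :=
  ∑ a ∈ s, (ENNReal.ofReal (w a)) • Measure.dirac a

/-- total accumulated reward `∫₀ᵗ r(X(s),Y(s),A(s),B(s)) ds
  = Σₘ r(Xₘ,Yₘ,Aₘ,Bₘ)(Sₘ₊₁∧t − Sₘ∧t)` -/
noncomputable def accR (r : EX → EY → Act1 → Act2 → ℝ) (ω : Omega EX EY Act1 Act2) (t : ℝ) : ℝ :=
  ∑' m : ℕ, r (Xv ω m) (Yv ω m) (Av ω m) (Bv ω m) * (min (Sv ω (m + 1)) t - min (Sv ω m) t)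

/-- truncated accumulated reward `Σ_{m=0}^n r(Xₘ,Yₘ,Aₘ,Bₘ)(Sₘ₊₁∧t − Sₘ∧t)` -/
noncomputable def accRn (r : EX → EY → Act1 → Act2 → ℝ) (ω : Omega EX EY Act1 Act2)
    (t : ℝ) (n : ℕ) : ℝ :=
  ∑ m ∈ Finset.range (n + 1),
    r (Xv ω m) (Yv ω m) (Av ω m) (Bv ω m) * (min (Sv ω (m + 1)) t - min (Sv ω m) t)

/-- `F₋₁(t,x,μ) = ∫∫ 1_{[0,∞)}(λ) μ(dy,dλ)` -/
noncomputable def Fneg (μ : Measure (EY × ℝ)) : ℝ := (μ {p : EY × ℝ | 0 ≤ p.2}).toReal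

/-- membership in `𝓕_m`: Borel-measurable functions `ℝ₊ × E_X × P(E_Y × ℝ) → [0,1]` -/
def MemFm (H : ℝ → EX → Measure (EY × ℝ) → ℝ) : Prop :=
  Measurable (fun p : ℝ × EX × Measure (EY × ℝ) => H p.1 p.2.1 p.2.2) ∧
  ∀ (t : ℝ) (x : EX) (μ : Measure (EY × ℝ)), 0 ≤ t → IsProbabilityMeasure μ →
    H t x μ ∈ Set.Icc (0 : ℝ) 1

/-- The data of a partially observable semi-Markov game (model (2.1)):
Borel state spaces `E_X, E_Y`, action spaces `A, B` with finite admissible action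
sets `A(x), B(x)`, a semi-Markov kernel `Q` on `ℝ₊ × E_X × E_Y` given `𝕂` admitting a
density `q` w.r.t. σ-finite measures `η, ν`, and a nonnegative measurable reward rate `r`. -/
structure Model (EX EY Act1 Act2 : Type*) [MeasurableSpace EX] [MeasurableSpace EY]
    [MeasurableSpace Act1] [MeasurableSpace Act2] where
  η : Measure EX
  ν : Measure EY
  sfη : SigmaFinite η
  sfν : SigmaFinite ν
  /-- the density `q(t, x', y' ∣ x, y, a, b)` of the semi-Markov kernel -/
  q : ℝ → EX → EY → EX → EY → Act1 → Act2 → ℝ≥0∞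
  hq : Measurable fun p : ℝ × EX × EY × EX × EY × Act1 × Act2 =>
        q p.1 p.2.1 p.2.2.1 p.2.2.2.1 p.2.2.2.2.1 p.2.2.2.2.2.1 p.2.2.2.2.2.2
  /-- the semi-Markov kernel `Q(⋅ ∣ x, y, a, b)`, as a measure on (sojourn time, next state) -/
  Qker : EX → EY → Act1 → Act2 → Measure (ℝ × EX × EY)
  hQker : Measurable fun p : EX × EY × Act1 × Act2 => Qker p.1 p.2.1 p.2.2.1 p.2.2.2
  hQprob : ∀ x y a b, IsProbabilityMeasure (Qker x y a b)
  /-- `Q(0, ⋅ ∣ x,y,a,b) = 0`: sojourn times are positive -/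
  hQpos : ∀ x y a b, Qker x y a b {p : ℝ × EX × EY | p.1 ≤ 0} = 0
  /-- `Q(t, D ∣ x,y,a,b) = ∫_D q(t,x',y' ∣ x,y,a,b) η(dx') ν(dy')` -/
  hdens : ∀ (x : EX) (y : EY) (a : Act1) (b : Act2) (t : ℝ) (D : Set (EX × EY)),
      MeasurableSet D →
      Qker x y a b {p : ℝ × EX × EY | p.1 ≤ t ∧ p.2 ∈ D}
        = ∫⁻ x', ∫⁻ y', D.indicator (fun _ => (1 : ℝ≥0∞)) (x', y') * q t x' y' x y a b ∂ν ∂η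
  /-- reward rate of player 1 -/
  r : EX → EY → Act1 → Act2 → ℝ
  hr : Measurable fun p : EX × EY × Act1 × Act2 => r p.1 p.2.1 p.2.2.1 p.2.2.2
  hrnn : ∀ x y a b, 0 ≤ r x y a b
  /-- admissible actions of player 1 -/
  Aset : EX → Finset Act1
  /-- admissible actions of player 2 -/
  Bset : EX → Finset Act2
  hA : ∀ x, (Aset x).Nonempty
  hB : ∀ x, (Bset x).Nonempty

namespace Model

variable (M : Model EX EY Act1 Act2)

/-- marginal transition density `q^X(t, x' ∣ x, y, a, b) = ∫ q(t,x',y' ∣ x,y,a,b) ν(dy')` -/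
noncomputable def qX (θ : ℝ) (x' x : EX) (y : EY) (a : Act1) (b : Act2) : ℝ≥0∞ :=
  ∫⁻ y', M.q θ x' y' x y a b ∂M.ν

/-- `Q^X(t, E_X ∣ x, y, a, b)`: probability that the sojourn time is `≤ t` -/
def QXt (t : ℝ) (x : EX) (y : EY) (a : Act1) (b : Act2) : ℝ≥0∞ :=
  M.Qker x y a b {p : ℝ × EX × EY | p.1 ≤ t}

/-- `Q^X(⋅ ∣ x, μ̃, a, b)` as a measure on (sojourn time, next observable state) -/
noncomputable def QXm (x : EX) (μY : Measure EY) (a : Act1) (b : Act2) : Measure (ℝ × EX) :=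
  μY.bind fun y => (M.Qker x y a b).map fun p => (p.1, p.2.1)

/-- the updating (filtering) operator `Υ(t,x,μ,a,b,θ,t',x')` of Section 3 -/
noncomputable def upd (t : ℝ) (x : EX) (μ : Measure (EY × ℝ)) (a : Act1) (b : Act2)
    (θ t' : ℝ) (x' : EX) : Measure (EY × ℝ) :=
  ((if t' = max (t - θ) 0 then (1 : ℝ≥0∞) else 0)
      * (∫⁻ y, M.qX θ x' x y a b ∂(μ.map Prod.fst))⁻¹) •
    μ.bind fun p =>
      (M.ν.withDensity fun y' => M.q θ x' y' x p.1 a b).map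
        fun y' => (y', p.2 - M.r x p.1 a b * min θ t)

/-- the filter equation (3.2): `μ₀ := μ`,
`μₙ₊₁(⋅ ∣ iₙ,a,b,θ,t,x') := Υ(tₙ,xₙ,μₙ(⋅∣iₙ),a,b,θ,t,x')` -/
noncomputable def filt (μ0 : Measure (EY × ℝ)) :
    (n : ℕ) → ObsHist EX Act1 Act2 n → Measure (EY × ℝ)
  | 0, _ => μ0
  | n + 1, i =>
      M.upd ((i.1 (Fin.castSucc (Fin.last n))).2.1) ((i.1 (Fin.castSucc (Fin.last n))).2.2)
        (filt μ0 n (Fin.init i.1, Fin.init i.2))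
        (i.2 (Fin.last n)).1 (i.2 (Fin.last n)).2
        (i.1 (Fin.last (n + 1))).1 (i.1 (Fin.last (n + 1))).2.1 (i.1 (Fin.last (n + 1))).2.2

/-- the operator `T^{φ₁,φ₂}` of Section 4, for mixed actions `φ₁ ∈ P(A(x))`, `φ₂ ∈ P(B(x))` -/
noncomputable def Tmix (H : ℝ → EX → Measure (EY × ℝ) → ℝ)
    (w1 : Act1 → ℝ) (w2 : Act2 → ℝ) (t : ℝ) (x : EX) (μ : Measure (EY × ℝ)) : ℝ :=
  ∑ a ∈ M.Aset x, ∑ b ∈ M.Bset x, w1 a * w2 b *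
    ((∫ p : EY × ℝ,
        (Set.indicator (Set.Icc 0 p.2) (fun _ => (1 : ℝ)) (M.r x p.1 a b * t))
          * (1 - (M.QXt t x p.1 a b).toReal) ∂μ)
      + ∫ p in {p : ℝ × EX | 0 ≤ p.1 ∧ p.1 ≤ t},
          H (t - p.1) p.2 (M.upd t x μ a b p.1 (t - p.1) p.2)
          ∂(M.QXm x (μ.map Prod.fst) a b))

/-- the operator `T^{φ,ψ}` for Markov decision rules `φ, ψ` -/
noncomputable def Tker (φ : MKer EX EY Act1) (ψ : MKer EX EY Act2)
    (H : ℝ → EX → Measure (EY × ℝ) → ℝ) (t : ℝ) (x : EX) (μ : Measure (EY × ℝ)) : ℝ :=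
  M.Tmix H (φ t x μ) (ψ t x μ) t x μ

/-- admissibility of a policy of player 1 -/
def IsAdm1 (π : Pol1 EX EY Act1 Act2) : Prop :=
  (∀ n μ0 i, IsProbabilityMeasure (π n μ0 i)) ∧
  (∀ (n : ℕ) (μ0 : Measure (EY × ℝ)) (i : ObsHist EX Act1 Act2 n),
      π n μ0 i (↑(M.Aset i.xn)) = 1) ∧
  (∀ n : ℕ, Measurable fun p : Measure (EY × ℝ) × ObsHist EX Act1 Act2 n => π n p.1 p.2)

/-- admissibility of a policy of player 2 -/
def IsAdm2 (π : Pol2 EX EY Act1 Act2) : Prop :=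
  (∀ n μ0 i, IsProbabilityMeasure (π n μ0 i)) ∧
  (∀ (n : ℕ) (μ0 : Measure (EY × ℝ)) (i : ObsHist EX Act1 Act2 n),
      π n μ0 i (↑(M.Bset i.xn)) = 1) ∧
  (∀ n : ℕ, Measurable fun p : Measure (EY × ℝ) × ObsHist EX Act1 Act2 n => π n p.1 p.2)

/-- a Markov decision rule for player 1: a measurable stochastic kernel concentrated on `A(x)` -/
def IsMKer1 (φ : MKer EX EY Act1) : Prop :=
  (∀ t x μ, IsMixed (M.Aset x) (φ t x μ)) ∧
  ∀ a, Measurable fun p : ℝ × EX × Measure (EY × ℝ) => φ p.1 p.2.1 p.2.2 a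

/-- a Markov decision rule for player 2 -/
def IsMKer2 (ψ : MKer EX EY Act2) : Prop :=
  (∀ t x μ, IsMixed (M.Bset x) (ψ t x μ)) ∧
  ∀ b, Measurable fun p : ℝ × EX × Measure (EY × ℝ) => ψ p.1 p.2.1 p.2.2 b

/-- the admissible policy induced by a Markov policy `{φₙ}` through the filter equation -/
noncomputable def toAdm1 (φ : ℕ → MKer EX EY Act1) : Pol1 EX EY Act1 Act2 :=
  fun n μ0 i => weightsMeasure (M.Aset i.xn) (φ n i.tn i.xn (M.filt μ0 n i))

/-- the admissible policy induced by a Markov policy `{ψₙ}` through the filter equation -/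
noncomputable def toAdm2 (ψ : ℕ → MKer EX EY Act2) : Pol2 EX EY Act1 Act2 :=
  fun n μ0 i => weightsMeasure (M.Bset i.xn) (ψ n i.tn i.xn (M.filt μ0 n i))

/-- `P` is the canonical (Ionescu-Tulcea) probability measure
`P^{π¹,π²}_{(t,x,μ)}` of the POSMG: it has the prescribed initial distribution and
satisfies the one-step construction formula of Section 2. -/
structure IsCanonical (π1 : Pol1 EX EY Act1 Act2) (π2 : Pol2 EX EY Act1 Act2)
    (t : ℝ) (x : EX) (μ : Measure (EY × ℝ)) (P : Measure (Omega EX EY Act1 Act2)) : Prop where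
  prob : IsProbabilityMeasure P
  init : P.map (fun ω => fullHist ω 0)
      = μ.map fun p =>
          ((fun _ : Fin 1 => ((0 : ℝ), t, x, p.1, p.2), fun i : Fin 0 => i.elim0) :
            FullHist EX EY Act1 Act2 0)
  step : ∀ (n : ℕ) (g : FullHist EX EY Act1 Act2 (n + 1) → ℝ≥0∞), Measurable g →
      ∫⁻ ω, g (fullHist ω (n + 1)) ∂P
        = ∫⁻ ω,
            ∫⁻ a, ∫⁻ b, ∫⁻ p : ℝ × EX × EY,
              g (Fin.snoc (fullHist ω n).1
                    (p.1, max (Tv ω n - p.1) 0, p.2.1, p.2.2,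
                      Λv ω n - M.r (Xv ω n) (Yv ω n) a b * min p.1 (Tv ω n)),
                 Fin.snoc (fullHist ω n).2 (a, b))
              ∂(M.Qker (Xv ω n) (Yv ω n) a b)
            ∂(π2 n μ (obsHist ω n)) ∂(π1 n μ (obsHist ω n)) ∂P

/-- the risk probability criterion (2.2) evaluated under a measure `P`:
`F^{π¹,π²}(t,x,μ) = P(∫₀ᵗ r ds ≤ Λ(0))` -/
noncomputable def FcritMeas (P : Measure (Omega EX EY Act1 Act2)) (t : ℝ) : ℝ :=
  (P {ω | accR M.r ω t ≤ Λv ω 0}).toReal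

/-- the truncated criterion `Fₙ^{π¹,π²}(t,x,μ)`, `n ≥ 0`, evaluated under `P` -/
noncomputable def FtruncMeas (P : Measure (Omega EX EY Act1 Act2)) (t : ℝ) (n : ℕ) : ℝ :=
  (P {ω | accRn M.r ω t n ≤ Λv ω 0}).toReal

section Family

variable (CanP : Pol1 EX EY Act1 Act2 → Pol2 EX EY Act1 Act2 →
    ℝ → EX → Measure (EY × ℝ) → Measure (Omega EX EY Act1 Act2))

/-- `F^{π¹,π²}(t,x,μ)` for a family of canonical measures -/
noncomputable def FcritP (π1 : Pol1 EX EY Act1 Act2) (π2 : Pol2 EX EY Act1 Act2)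
    (t : ℝ) (x : EX) (μ : Measure (EY × ℝ)) : ℝ :=
  M.FcritMeas (CanP π1 π2 t x μ) t

/-- `Fₙ^{π¹,π²}(t,x,μ)` for a family of canonical measures -/
noncomputable def FtruncP (π1 : Pol1 EX EY Act1 Act2) (π2 : Pol2 EX EY Act1 Act2)
    (t : ℝ) (x : EX) (μ : Measure (EY × ℝ)) (n : ℕ) : ℝ :=
  M.FtruncMeas (CanP π1 π2 t x μ) t n

/-- the family `CanP` consists of the canonical measures of the game -/
def IsCanFamily : Prop :=
  ∀ π1 π2 t x μ, M.IsAdm1 π1 → M.IsAdm2 π2 → 0 ≤ t → IsProbabilityMeasure μ →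
    M.IsCanonical π1 π2 t x μ (CanP π1 π2 t x μ)

/-- Assumption 1: `P^{π¹,π²}_{(t,x,μ)}(S_∞ > T) = 1` for every horizon `T`,
every initial condition and every pair of admissible policies -/
def Assumption1 : Prop :=
  ∀ (T : ℝ), 0 ≤ T → ∀ π1 π2, M.IsAdm1 π1 → M.IsAdm2 π2 →
    ∀ (t : ℝ) (x : EX) (μ : Measure (EY × ℝ)), 0 ≤ t → IsProbabilityMeasure μ →
      CanP π1 π2 t x μ {ω | ∃ n, Sv ω n > T} = 1

/-- the lower value `V̲(t,x,μ) = sup_{π²} inf_{π¹} F^{π¹,π²}(t,x,μ)` -/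
noncomputable def lowerVal (t : ℝ) (x : EX) (μ : Measure (EY × ℝ)) : ℝ :=
  ⨆ π2 : {π : Pol2 EX EY Act1 Act2 // M.IsAdm2 π},
    ⨅ π1 : {π : Pol1 EX EY Act1 Act2 // M.IsAdm1 π},
      M.FcritP CanP π1.1 π2.1 t x μ

/-- the upper value `V̄(t,x,μ) = inf_{π¹} sup_{π²} F^{π¹,π²}(t,x,μ)` -/
noncomputable def upperVal (t : ℝ) (x : EX) (μ : Measure (EY × ℝ)) : ℝ :=
  ⨅ π1 : {π : Pol1 EX EY Act1 Act2 // M.IsAdm1 π},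
    ⨆ π2 : {π : Pol2 EX EY Act1 Act2 // M.IsAdm2 π},
      M.FcritP CanP π1.1 π2.1 t x μ

end Family

/-- the value iteration sequence of the proof of Theorem 4.2; `uiter 0 = u⁻¹` and
`uiter (k+1) = uᵏ = inf_φ sup_ψ T^{φ,ψ} (uiter k)` -/
noncomputable def uiter : ℕ → ℝ → EX → Measure (EY × ℝ) → ℝ
  | 0 => fun _ _ μ => Fneg μ
  | k + 1 => fun t x μ =>
      ⨅ w1 : Mixed (M.Aset x), ⨆ w2 : Mixed (M.Bset x),
        M.Tmix (uiter k) w1.1 w2.1 t x μ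

end Model

end POSMG
namespace POSMG

open Topology

section Aux

variable {EX EY Act1 Act2 : Type*} [MeasurableSpace EX] [MeasurableSpace EY]
  [MeasurableSpace Act1] [MeasurableSpace Act2]

lemma measurable_fullHist (n : ℕ) :
    Measurable (fun ω : Omega EX EY Act1 Act2 => fullHist ω n) := by
  unfold fullHist Θv Tv Xv Yv Λv Av Bv
  fun_prop

/-- number of sojourn times among `Θ₁,…,Θₙ` exceeding `δ` -/
noncomputable def cnt (δ : ℝ) (n : ℕ) (ω : Omega EX EY Act1 Act2) : ℕ :=
  ∑ k : Fin n, if δ < Θv ω (k + 1) then 1 else 0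

/-- the same count, read off the full history -/
noncomputable def cntH (δ : ℝ) (n : ℕ) (h : FullHist EX EY Act1 Act2 n) : ℕ :=
  ∑ k : Fin n, if δ < (h.1 k.succ).1 then 1 else 0

omit [MeasurableSpace EX] [MeasurableSpace EY] [MeasurableSpace Act1] [MeasurableSpace Act2] in
lemma cntH_fullHist (δ : ℝ) (n : ℕ) (ω : Omega EX EY Act1 Act2) :
    cntH δ n (fullHist ω n) = cnt δ n ω := rfl

lemma measurable_cntH (δ : ℝ) (n : ℕ) :
    Measurable (fun h : FullHist EX EY Act1 Act2 n => cntH δ n h) := by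
  unfold cntH
  refine Finset.measurable_sum _ fun k _ => Measurable.ite ?_ measurable_const measurable_const
  exact measurableSet_lt measurable_const
    ((measurable_fst.comp ((measurable_pi_apply k.succ).comp measurable_fst)))

omit [MeasurableSpace EX] [MeasurableSpace EY] [MeasurableSpace Act1] [MeasurableSpace Act2] in
lemma cnt_succ (δ : ℝ) (n : ℕ) (ω : Omega EX EY Act1 Act2) :
    cnt δ (n + 1) ω = cnt δ n ω + (if δ < Θv ω (n + 1) then 1 else 0) := by
  unfold cnt
  rw [Fin.sum_univ_castSucc]
  rfl

/-- Key estimate from the one-step construction of the canonical measure: if the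
semi-Markov kernel assigns mass at most `c` to sojourn times `≤ u` (uniformly over
admissible actions), then for any event `C` depending on the history up to time `n`,
`P(C ∩ {Θ_{n+1} ≤ u}) ≤ c ⬝ P(C)`. -/
lemma step_bound [MeasurableSingletonClass Act1] [MeasurableSingletonClass Act2]
    (M : Model EX EY Act1 Act2)
    {π1 : Pol1 EX EY Act1 Act2} {π2 : Pol2 EX EY Act1 Act2}
    {t : ℝ} {x : EX} {μ : Measure (EY × ℝ)} {P : Measure (Omega EX EY Act1 Act2)}
    (hπ1 : M.IsAdm1 π1) (hπ2 : M.IsAdm2 π2)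
    (hP : M.IsCanonical π1 π2 t x μ P)
    (n : ℕ) {C : Set (FullHist EX EY Act1 Act2 n)} (hC : MeasurableSet C)
    (u : ℝ) (c : ℝ≥0∞) (hc : c ≠ ⊤)
    (hQb : ∀ x' y a b, a ∈ M.Aset x' → b ∈ M.Bset x' →
        M.Qker x' y a b {p : ℝ × EX × EY | p.1 ≤ u} ≤ c) :
    P ({ω | fullHist ω n ∈ C} ∩ {ω | Θv ω (n + 1) ≤ u})
      ≤ c * P {ω | fullHist ω n ∈ C} := by
  classical
  have hA : MeasurableSet {ω : Omega EX EY Act1 Act2 | fullHist ω n ∈ C} :=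
    (measurable_fullHist n) hC
  have hB : MeasurableSet {ω : Omega EX EY Act1 Act2 | Θv ω (n + 1) ≤ u} := by
    have : Measurable (fun ω : Omega EX EY Act1 Act2 => Θv ω (n + 1)) := by
      unfold Θv; fun_prop
    exact measurableSet_le this measurable_const
  set g : FullHist EX EY Act1 Act2 (n + 1) → ℝ≥0∞ := fun h =>
    C.indicator 1 (Fin.init h.1, Fin.init h.2)
      * (Set.Iic u).indicator 1 (h.1 (Fin.last (n + 1))).1 with hg_def
  have hgm : Measurable g := by
    apply Measurable.mul
    · apply (measurable_const.indicator hC).comp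
      apply Measurable.prodMk
      · exact measurable_pi_lambda _ fun k => (measurable_pi_apply _).comp measurable_fst
      · exact measurable_pi_lambda _ fun k => (measurable_pi_apply _).comp measurable_snd
    · exact (measurable_const.indicator measurableSet_Iic).comp
        (measurable_fst.comp ((measurable_pi_apply (Fin.last (n + 1))).comp measurable_fst))
  have hgfull : ∀ ω : Omega EX EY Act1 Act2,
      g (fullHist ω (n + 1))
        = ({ω : Omega EX EY Act1 Act2 | fullHist ω n ∈ C}
            ∩ {ω : Omega EX EY Act1 Act2 | Θv ω (n + 1) ≤ u}).indicator 1 ω := by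
    intro ω
    have h1 : (Fin.init (fullHist ω (n + 1)).1, Fin.init (fullHist ω (n + 1)).2)
        = fullHist ω n := rfl
    have h2 : ((fullHist ω (n + 1)).1 (Fin.last (n + 1))).1 = Θv ω (n + 1) := rfl
    rw [hg_def]
    by_cases hc1 : fullHist ω n ∈ C <;> by_cases hc2 : Θv ω (n + 1) ≤ u <;>
      simp [h1, h2, Set.indicator_apply, hc1, hc2, Set.mem_Iic]
  have hL : P ({ω : Omega EX EY Act1 Act2 | fullHist ω n ∈ C}
        ∩ {ω : Omega EX EY Act1 Act2 | Θv ω (n + 1) ≤ u})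
      = ∫⁻ ω, g (fullHist ω (n + 1)) ∂P := by
    rw [show (fun ω => g (fullHist ω (n + 1)))
        = ({ω : Omega EX EY Act1 Act2 | fullHist ω n ∈ C}
            ∩ {ω : Omega EX EY Act1 Act2 | Θv ω (n + 1) ≤ u}).indicator 1
        from funext hgfull,
      lintegral_indicator_one (hA.inter hB)]
  rw [hL, hP.step n g hgm]
  have hgs : ∀ (ω : Omega EX EY Act1 Act2) (θ : ℝ) (rest : ℝ × EX × EY × ℝ)
      (w : Act1 × Act2),
      g (Fin.snoc (fullHist ω n).1 (θ, rest), Fin.snoc (fullHist ω n).2 w)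
        = C.indicator 1 (fullHist ω n) * (Set.Iic u).indicator 1 θ := by
    intro ω θ rest w
    rw [hg_def]
    simp only [Fin.init_snoc, Fin.snoc_last]
  have key : ∀ ω : Omega EX EY Act1 Act2,
      (∫⁻ a, ∫⁻ b, ∫⁻ p : ℝ × EX × EY,
          g (Fin.snoc (fullHist ω n).1
                (p.1, max (Tv ω n - p.1) 0, p.2.1, p.2.2,
                  Λv ω n - M.r (Xv ω n) (Yv ω n) a b * min p.1 (Tv ω n)),
             Fin.snoc (fullHist ω n).2 (a, b))
          ∂(M.Qker (Xv ω n) (Yv ω n) a b)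
        ∂(π2 n μ (obsHist ω n)) ∂(π1 n μ (obsHist ω n)))
        ≤ C.indicator 1 (fullHist ω n) * c := by
    intro ω
    have hind_ne : (C.indicator 1 (fullHist ω n) : ℝ≥0∞) ≠ ⊤ := by
      by_cases h : fullHist ω n ∈ C <;> simp [Set.indicator_apply, h]
    haveI hpm1 : IsProbabilityMeasure (π1 n μ (obsHist ω n)) := hπ1.1 n μ (obsHist ω n)
    haveI hpm2 : IsProbabilityMeasure (π2 n μ (obsHist ω n)) := hπ2.1 n μ (obsHist ω n)
    have hinner : ∀ (a : Act1) (b : Act2),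
        (∫⁻ p : ℝ × EX × EY,
            g (Fin.snoc (fullHist ω n).1
                  (p.1, max (Tv ω n - p.1) 0, p.2.1, p.2.2,
                    Λv ω n - M.r (Xv ω n) (Yv ω n) a b * min p.1 (Tv ω n)),
               Fin.snoc (fullHist ω n).2 (a, b))
            ∂(M.Qker (Xv ω n) (Yv ω n) a b))
          = C.indicator 1 (fullHist ω n)
              * M.Qker (Xv ω n) (Yv ω n) a b {p : ℝ × EX × EY | p.1 ≤ u} := by
      intro a b
      simp only [hgs]
      rw [lintegral_const_mul' _ _ hind_ne]
      congr 1
      rw [show (fun p : ℝ × EX × EY => (Set.Iic u).indicator 1 p.1)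
          = ({p : ℝ × EX × EY | p.1 ≤ u}).indicator 1 from
        funext fun p => by by_cases hp : p.1 ≤ u <;> simp [Set.indicator_apply, hp]]
      exact lintegral_indicator_one (measurableSet_le measurable_fst measurable_const)
    have hBae : ∀ᵐ b ∂(π2 n μ (obsHist ω n)), b ∈ M.Bset (Xv ω n) := by
      rw [ae_iff]
      have h1 : π2 n μ (obsHist ω n) (↑(M.Bset (Xv ω n))) = 1 := hπ2.2.1 n μ (obsHist ω n)
      have h2 : {b | ¬ b ∈ M.Bset (Xv ω n)} = (↑(M.Bset (Xv ω n)) : Set Act2)ᶜ := by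
        ext b; simp
      rw [h2, prob_compl_eq_zero_iff (Finset.measurableSet _)]
      exact h1
    have hAae : ∀ᵐ a ∂(π1 n μ (obsHist ω n)), a ∈ M.Aset (Xv ω n) := by
      rw [ae_iff]
      have h1 : π1 n μ (obsHist ω n) (↑(M.Aset (Xv ω n))) = 1 := hπ1.2.1 n μ (obsHist ω n)
      have h2 : {a | ¬ a ∈ M.Aset (Xv ω n)} = (↑(M.Aset (Xv ω n)) : Set Act1)ᶜ := by
        ext a; simp
      rw [h2, prob_compl_eq_zero_iff (Finset.measurableSet _)]
      exact h1
    have hb2 : ∀ a, a ∈ M.Aset (Xv ω n) → ∀ᵐ b ∂(π2 n μ (obsHist ω n)),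
        (∫⁻ p : ℝ × EX × EY,
            g (Fin.snoc (fullHist ω n).1
                  (p.1, max (Tv ω n - p.1) 0, p.2.1, p.2.2,
                    Λv ω n - M.r (Xv ω n) (Yv ω n) a b * min p.1 (Tv ω n)),
               Fin.snoc (fullHist ω n).2 (a, b))
            ∂(M.Qker (Xv ω n) (Yv ω n) a b))
          ≤ C.indicator 1 (fullHist ω n) * c := fun a ha =>
      hBae.mono fun b hb => by
        rw [hinner a b]
        exact mul_le_mul_right (hQb _ _ _ _ ha hb) _
    have ha2 : ∀ᵐ a ∂(π1 n μ (obsHist ω n)),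
        (∫⁻ b, ∫⁻ p : ℝ × EX × EY,
            g (Fin.snoc (fullHist ω n).1
                  (p.1, max (Tv ω n - p.1) 0, p.2.1, p.2.2,
                    Λv ω n - M.r (Xv ω n) (Yv ω n) a b * min p.1 (Tv ω n)),
               Fin.snoc (fullHist ω n).2 (a, b))
            ∂(M.Qker (Xv ω n) (Yv ω n) a b) ∂(π2 n μ (obsHist ω n)))
          ≤ C.indicator 1 (fullHist ω n) * c :=
      hAae.mono fun a ha =>
        le_trans (lintegral_mono_ae (hb2 a ha))
          (le_of_eq (by rw [lintegral_const, measure_univ, mul_one]))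
    exact le_trans (lintegral_mono_ae ha2)
      (le_of_eq (by rw [lintegral_const, measure_univ, mul_one]))
  refine le_trans (lintegral_mono key) (le_of_eq ?_)
  rw [show (fun ω : Omega EX EY Act1 Act2 => C.indicator 1 (fullHist ω n) * c)
      = fun ω => c * ({ω : Omega EX EY Act1 Act2 | fullHist ω n ∈ C}).indicator 1 ω from
    funext fun ω => by
      by_cases h : fullHist ω n ∈ C <;> simp [Set.indicator_apply, h, mul_comm]]
  rw [lintegral_const_mul' _ _ hc, lintegral_indicator_one hA]

/-- Binomial tail bound on the number of long sojourn times. -/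
lemma cnt_bound [MeasurableSingletonClass Act1] [MeasurableSingletonClass Act2]
    (M : Model EX EY Act1 Act2)
    {π1 : Pol1 EX EY Act1 Act2} {π2 : Pol2 EX EY Act1 Act2}
    {t : ℝ} {x : EX} {μ : Measure (EY × ℝ)} {P : Measure (Omega EX EY Act1 Act2)}
    (hπ1 : M.IsAdm1 π1) (hπ2 : M.IsAdm2 π2)
    (hP : M.IsCanonical π1 π2 t x μ P)
    (δ : ℝ) (r : ℝ≥0∞) (hr : r ≠ ⊤)
    (hQb : ∀ x' y a b, a ∈ M.Aset x' → b ∈ M.Bset x' →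
        M.Qker x' y a b {p : ℝ × EX × EY | p.1 ≤ δ} ≤ r) :
    ∀ n j, P {ω | cnt δ n ω ≤ j}
      ≤ ∑ i ∈ Finset.range (j + 1), (n.choose i : ℝ≥0∞) * r ^ (n - i) := by
  haveI := hP.prob
  intro n
  induction n with
  | zero =>
    intro j
    have h1 : {ω : Omega EX EY Act1 Act2 | cnt δ 0 ω ≤ j} = Set.univ := by
      ext ω; simp [cnt]
    rw [h1, measure_univ]
    calc (1 : ℝ≥0∞) = ((Nat.choose 0 0 : ℕ) : ℝ≥0∞) * r ^ (0 - 0) := by simp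
      _ ≤ ∑ i ∈ Finset.range (j + 1), (Nat.choose 0 i : ℝ≥0∞) * r ^ (0 - i) :=
          Finset.single_le_sum (f := fun i => ((Nat.choose 0 i : ℕ) : ℝ≥0∞) * r ^ (0 - i))
            (fun i _ => zero_le) (Finset.mem_range.mpr (Nat.succ_pos j))
  | succ n ih =>
    intro j
    have hCm : ∀ m : ℕ, MeasurableSet {h : FullHist EX EY Act1 Act2 n | cntH δ n h ≤ m} :=
      fun m => (measurable_cntH δ n) (measurableSet_Iic (a := m))
    have hstep : ∀ m : ℕ,
        P ({ω : Omega EX EY Act1 Act2 | cnt δ n ω ≤ m} ∩ {ω | Θv ω (n + 1) ≤ δ})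
          ≤ r * P {ω : Omega EX EY Act1 Act2 | cnt δ n ω ≤ m} := fun m =>
      step_bound M hπ1 hπ2 hP n (hCm m) δ r hr hQb
    cases j with
    | zero =>
      have hsub : {ω : Omega EX EY Act1 Act2 | cnt δ (n + 1) ω ≤ 0}
          ⊆ {ω : Omega EX EY Act1 Act2 | cnt δ n ω ≤ 0} ∩ {ω | Θv ω (n + 1) ≤ δ} := by
        intro ω hω
        simp only [Set.mem_setOf_eq, cnt_succ] at hω
        constructor
        · simp only [Set.mem_setOf_eq]; omega
        · simp only [Set.mem_setOf_eq]
          by_contra hθ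
          simp [not_le.mp hθ] at hω
      calc P {ω : Omega EX EY Act1 Act2 | cnt δ (n + 1) ω ≤ 0}
          ≤ P ({ω : Omega EX EY Act1 Act2 | cnt δ n ω ≤ 0} ∩ {ω | Θv ω (n + 1) ≤ δ}) :=
            measure_mono hsub
        _ ≤ r * P {ω : Omega EX EY Act1 Act2 | cnt δ n ω ≤ 0} := hstep 0
        _ ≤ r * ∑ i ∈ Finset.range 1, (n.choose i : ℝ≥0∞) * r ^ (n - i) :=
            mul_le_mul_right (ih 0) r
        _ = ∑ i ∈ Finset.range 1, ((n + 1).choose i : ℝ≥0∞) * r ^ (n + 1 - i) := by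
            simp [Finset.sum_range_one, pow_succ]; ring
    | succ j =>
      have hsub : {ω : Omega EX EY Act1 Act2 | cnt δ (n + 1) ω ≤ j + 1}
          ⊆ {ω : Omega EX EY Act1 Act2 | cnt δ n ω ≤ j}
            ∪ ({ω : Omega EX EY Act1 Act2 | cnt δ n ω ≤ j + 1} ∩ {ω | Θv ω (n + 1) ≤ δ}) := by
        intro ω hω
        simp only [Set.mem_setOf_eq, cnt_succ] at hω
        by_cases hθ : δ < Θv ω (n + 1)
        · left
          simp only [Set.mem_setOf_eq]
          simp [hθ] at hω
          omega
        · right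
          refine ⟨?_, not_lt.mp hθ⟩
          simp only [Set.mem_setOf_eq]
          simp [hθ] at hω
          omega
      have hterm : ∀ i : ℕ, (n.choose i : ℝ≥0∞) * r ^ (n - i) * r
          ≤ (n.choose i : ℝ≥0∞) * r ^ (n + 1 - i) := by
        intro i
        rcases le_or_gt i n with hi | hi
        · rw [mul_assoc, ← pow_succ, show n - i + 1 = n + 1 - i by omega]
        · simp [Nat.choose_eq_zero_of_lt hi]
      calc P {ω : Omega EX EY Act1 Act2 | cnt δ (n + 1) ω ≤ j + 1}
          ≤ P ({ω : Omega EX EY Act1 Act2 | cnt δ n ω ≤ j}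
              ∪ ({ω : Omega EX EY Act1 Act2 | cnt δ n ω ≤ j + 1}
                  ∩ {ω | Θv ω (n + 1) ≤ δ})) := measure_mono hsub
        _ ≤ P {ω : Omega EX EY Act1 Act2 | cnt δ n ω ≤ j}
            + P ({ω : Omega EX EY Act1 Act2 | cnt δ n ω ≤ j + 1}
                  ∩ {ω | Θv ω (n + 1) ≤ δ}) := measure_union_le _ _
        _ ≤ (∑ i ∈ Finset.range (j + 1), (n.choose i : ℝ≥0∞) * r ^ (n - i))
            + r * ∑ i ∈ Finset.range (j + 2), (n.choose i : ℝ≥0∞) * r ^ (n - i) :=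
            add_le_add (ih j) (le_trans (hstep (j + 1)) (mul_le_mul_right (ih (j + 1)) r))
        _ ≤ (∑ i ∈ Finset.range (j + 1), (n.choose i : ℝ≥0∞) * r ^ (n - i))
            + ∑ i ∈ Finset.range (j + 2), (n.choose i : ℝ≥0∞) * r ^ (n + 1 - i) := by
            refine add_le_add_right ?_ _
            rw [Finset.mul_sum]
            refine Finset.sum_le_sum fun i _ => ?_
            rw [mul_comm r _]
            exact hterm i
        _ = ∑ i ∈ Finset.range (j + 2), (((n + 1).choose i : ℕ) : ℝ≥0∞) * r ^ (n + 1 - i) := by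
            rw [Finset.sum_range_succ' (fun i => ((n.choose i : ℕ) : ℝ≥0∞) * r ^ (n + 1 - i)) (j + 1),
              Finset.sum_range_succ' (fun i => (((n + 1).choose i : ℕ) : ℝ≥0∞) * r ^ (n + 1 - i)) (j + 1)]
            simp only [Nat.succ_sub_succ, Nat.choose_succ_succ, Nat.cast_add, add_mul,
              Nat.choose_zero_right, Nat.cast_one, one_mul, Nat.sub_zero]
            rw [Finset.sum_add_distrib]
            ring
  
end Aux

/-- **Proposition 1.** If there are `δ > 0`, `ε > 0` with
`Q(δ, E_X × E_Y ∣ x,y,a,b) ≤ 1 − ε` for all admissible `(x,y,a,b) ∈ 𝕂`, then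
`P^{π¹,π²}_{(t,x,μ)}(S_∞ > T) = 1` for every horizon `T`, every initial triple and
every pair of admissible policies; i.e. Assumption 1 holds. -/
theorem proposition1
    {EX EY Act1 Act2 : Type*} [MeasurableSpace EX] [MeasurableSpace EY]
    [MeasurableSpace Act1] [MeasurableSpace Act2]
    [StandardBorelSpace EX] [StandardBorelSpace EY]
    [StandardBorelSpace Act1] [StandardBorelSpace Act2]
    (M : Model EX EY Act1 Act2)
    (δ ε : ℝ) (hδ : 0 < δ) (hε : 0 < ε)
    (hQ : ∀ (x : EX) (y : EY) (a : Act1) (b : Act2), a ∈ M.Aset x → b ∈ M.Bset x →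
        M.Qker x y a b {p : ℝ × EX × EY | p.1 ≤ δ} ≤ 1 - ENNReal.ofReal ε) :
    ∀ (T : ℝ), 0 ≤ T →
      ∀ (π1 : Pol1 EX EY Act1 Act2) (π2 : Pol2 EX EY Act1 Act2),
        M.IsAdm1 π1 → M.IsAdm2 π2 →
          ∀ (t : ℝ) (x : EX) (μ : Measure (EY × ℝ)), 0 ≤ t → IsProbabilityMeasure μ →
            ∀ P : Measure (Omega EX EY Act1 Act2), M.IsCanonical π1 π2 t x μ P →
              P {ω | ∃ n, Sv ω n > T} = 1 := by
  intro T hT π1 π2 hπ1 hπ2 t x μ ht hμ P hP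
  classical
  haveI := hP.prob
  -- the target event is measurable
  have hSv : ∀ n, Measurable fun ω : Omega EX EY Act1 Act2 => Sv ω n := by
    intro n
    unfold Sv Θv
    exact Finset.measurable_sum _ fun i _ => measurable_fst.comp (measurable_pi_apply i)
  have hSmeas : MeasurableSet {ω : Omega EX EY Act1 Act2 | ∃ n, Sv ω n > T} := by
    rw [show {ω : Omega EX EY Act1 Act2 | ∃ n, Sv ω n > T}
        = ⋃ n, {ω : Omega EX EY Act1 Act2 | T < Sv ω n} from by
      ext ω; simp [Set.mem_iUnion]]
    exact MeasurableSet.iUnion fun n => measurableSet_lt measurable_const (hSv n)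
  rw [← prob_compl_eq_zero_iff hSmeas]
  rw [show {ω : Omega EX EY Act1 Act2 | ∃ n, Sv ω n > T}ᶜ
      = {ω : Omega EX EY Act1 Act2 | ∀ n, Sv ω n ≤ T} from by
    ext ω; simp [not_lt]]
  refine le_antisymm ?_ zero_le
  -- the exceptional null set
  set N : Set (Omega EX EY Act1 Act2) :=
    {ω | Θv ω 0 ≠ 0} ∪ ⋃ k, {ω | Θv ω (k + 1) ≤ 0} with hN_def
  have hN0 : P {ω : Omega EX EY Act1 Act2 | Θv ω 0 ≠ 0} = 0 := by
    have hfm : Measurable (fun ω : Omega EX EY Act1 Act2 => fullHist ω 0) :=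
      measurable_fullHist 0
    have hmeasf : Measurable (fun h : FullHist EX EY Act1 Act2 0 => (h.1 0).1) := by
      fun_prop
    have hsm : MeasurableSet {h : FullHist EX EY Act1 Act2 0 | (h.1 0).1 ≠ 0} :=
      hmeasf (measurableSet_singleton (0 : ℝ)).compl
    have hgm2 : Measurable (fun p : EY × ℝ =>
        ((fun _ : Fin 1 => ((0 : ℝ), t, x, p.1, p.2), fun i : Fin 0 => i.elim0) :
          FullHist EX EY Act1 Act2 0)) := by
      apply Measurable.prodMk
      · exact measurable_pi_lambda _ fun _ => by fun_prop
      · exact measurable_pi_lambda _ fun i => i.elim0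
    have h1 : P {ω : Omega EX EY Act1 Act2 | Θv ω 0 ≠ 0}
        = (P.map (fun ω => fullHist ω 0)) {h : FullHist EX EY Act1 Act2 0 | (h.1 0).1 ≠ 0} := by
      rw [Measure.map_apply hfm hsm]
      rfl
    rw [h1, hP.init, Measure.map_apply hgm2 hsm]
    rw [show (fun p : EY × ℝ =>
        ((fun _ : Fin 1 => ((0 : ℝ), t, x, p.1, p.2), fun i : Fin 0 => i.elim0) :
          FullHist EX EY Act1 Act2 0)) ⁻¹' {h : FullHist EX EY Act1 Act2 0 | (h.1 0).1 ≠ 0}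
        = (∅ : Set (EY × ℝ)) from by ext p; simp]
    exact measure_empty
  have hNk : ∀ k, P {ω : Omega EX EY Act1 Act2 | Θv ω (k + 1) ≤ 0} = 0 := by
    intro k
    have h := step_bound M hπ1 hπ2 hP k (MeasurableSet.univ
        (α := FullHist EX EY Act1 Act2 k)) 0 0 (by simp)
      (fun x' y a b _ _ => le_of_eq (M.hQpos x' y a b))
    simp only [Set.mem_univ, Set.setOf_true, Set.univ_inter, zero_mul,
      nonpos_iff_eq_zero] at h
    exact h
  have hNnull : P N = 0 := measure_union_null hN0 (measure_iUnion_null hNk)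
  set K : ℕ := ⌊T / δ⌋₊ with hK_def
  -- off the null set, `Sₙ ≤ T` forces few long sojourns
  have hsub : ∀ n, {ω : Omega EX EY Act1 Act2 | ∀ m, Sv ω m ≤ T}
      ⊆ {ω : Omega EX EY Act1 Act2 | cnt δ n ω ≤ K} ∪ N := by
    intro n ω hω
    by_cases hN : ω ∈ N
    · exact Or.inr hN
    · left
      simp only [hN_def, Set.mem_union, Set.mem_setOf_eq, Set.mem_iUnion, not_or,
        not_exists] at hN
      obtain ⟨h0, hk⟩ := hN
      have h0' : Θv ω 0 = 0 := not_not.mp h0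
      have hkpos : ∀ k, 0 < Θv ω (k + 1) := fun k => lt_of_not_ge (hk k)
      have hSn : Sv ω n = ∑ k ∈ Finset.range n, Θv ω (k + 1) := by
        unfold Sv
        rw [Finset.sum_range_succ']
        simp [h0']
      have hcnt : δ * (cnt δ n ω : ℝ) ≤ Sv ω n := by
        rw [hSn]
        unfold cnt
        push_cast
        rw [Finset.mul_sum, ← Fin.sum_univ_eq_sum_range (fun k => Θv ω (k + 1)) n]
        refine Finset.sum_le_sum fun k _ => ?_
        by_cases hk' : δ < Θv ω ((k : ℕ) + 1)
        · simp [hk', le_of_lt hk']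
        · simp [hk', (hkpos (k : ℕ)).le]
      have hfl : (cnt δ n ω : ℝ) ≤ T / δ := by
        rw [le_div_iff₀' hδ]
        exact le_trans hcnt (hω n)
      exact Nat.le_floor hfl
  -- the quantitative bound
  set rQ : ℝ≥0∞ := 1 - ENNReal.ofReal ε with hrQ_def
  have hr_ne : rQ ≠ ⊤ := (tsub_le_self.trans_lt ENNReal.one_lt_top).ne
  have hQb : ∀ x' y a b, a ∈ M.Aset x' → b ∈ M.Bset x' →
      M.Qker x' y a b {p : ℝ × EX × EY | p.1 ≤ δ} ≤ rQ := fun x' y a b ha hb =>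
    hQ x' y a b ha hb
  have hbound : ∀ n, P {ω : Omega EX EY Act1 Act2 | ∀ m, Sv ω m ≤ T}
      ≤ ∑ i ∈ Finset.range (K + 1), (n.choose i : ℝ≥0∞) * rQ ^ (n - i) := by
    intro n
    calc P {ω : Omega EX EY Act1 Act2 | ∀ m, Sv ω m ≤ T}
        ≤ P ({ω : Omega EX EY Act1 Act2 | cnt δ n ω ≤ K} ∪ N) := measure_mono (hsub n)
      _ ≤ P {ω : Omega EX EY Act1 Act2 | cnt δ n ω ≤ K} + P N := measure_union_le _ _
      _ = P {ω : Omega EX EY Act1 Act2 | cnt δ n ω ≤ K} := by rw [hNnull, add_zero]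
      _ ≤ _ := cnt_bound M hπ1 hπ2 hP δ rQ hr_ne hQb n K
  -- the bound tends to zero
  have hr1 : rQ < 1 :=
    ENNReal.sub_lt_self ENNReal.one_ne_top one_ne_zero
      ((ENNReal.ofReal_pos.mpr hε).ne')
  set r' : ℝ := rQ.toReal with hr'_def
  have hr'0 : 0 ≤ r' := ENNReal.toReal_nonneg
  have hr'1 : r' < 1 := by
    have := (ENNReal.toReal_lt_toReal hr_ne ENNReal.one_ne_top).mpr hr1
    simpa using this
  have hrof : ENNReal.ofReal r' = rQ := ENNReal.ofReal_toReal hr_ne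
  have htend0 : ∀ i : ℕ,
      Tendsto (fun n : ℕ => (n.choose i : ℝ) * r' ^ (n - i)) atTop (𝓝 0) := by
    intro i
    rcases eq_or_lt_of_le hr'0 with h0 | h0
    · have hev : (fun _ : ℕ => (0 : ℝ))
          =ᶠ[atTop] fun n : ℕ => (n.choose i : ℝ) * r' ^ (n - i) := by
        filter_upwards [eventually_ge_atTop (i + 1)] with n hn
        rw [← h0, zero_pow (by omega : n - i ≠ 0), mul_zero]
      exact tendsto_const_nhds.congr' hev
    · have habs : |r'| < 1 := by rwa [abs_of_pos h0]
      have key := (tendsto_pow_const_mul_const_pow_of_abs_lt_one i habs).mul_const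
        ((r' ^ i)⁻¹)
      rw [zero_mul] at key
      refine squeeze_zero (fun n => by positivity) (fun n => ?_) key
      rcases le_or_gt i n with hi | hi
      · have h1 : (n.choose i : ℝ) ≤ (n : ℝ) ^ i := by
          exact_mod_cast Nat.choose_le_pow n i
        have h2 : r' ^ (n - i) = r' ^ n * (r' ^ i)⁻¹ := pow_sub₀ r' (ne_of_gt h0) hi
        rw [h2, ← mul_assoc]
        exact mul_le_mul_of_nonneg_right
          (mul_le_mul_of_nonneg_right h1 (pow_nonneg hr'0 n)) (by positivity)
      · simp only [Nat.choose_eq_zero_of_lt hi, Nat.cast_zero, zero_mul]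
        positivity
  have htend : Tendsto
      (fun n : ℕ => ∑ i ∈ Finset.range (K + 1), (n.choose i : ℝ≥0∞) * rQ ^ (n - i))
      atTop (𝓝 0) := by
    have heq : ∀ n : ℕ, ∑ i ∈ Finset.range (K + 1), (n.choose i : ℝ≥0∞) * rQ ^ (n - i)
        = ∑ i ∈ Finset.range (K + 1),
            ENNReal.ofReal ((n.choose i : ℝ) * r' ^ (n - i)) := by
      intro n
      refine Finset.sum_congr rfl fun i _ => ?_
      rw [ENNReal.ofReal_mul (by positivity), ENNReal.ofReal_pow hr'0, hrof,
        ENNReal.ofReal_natCast]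
    have h1 : Tendsto
        (fun n : ℕ => ∑ i ∈ Finset.range (K + 1),
          ENNReal.ofReal ((n.choose i : ℝ) * r' ^ (n - i))) atTop (𝓝 0) := by
      have h2 := tendsto_finset_sum (f := fun (i : ℕ) (n : ℕ) =>
          ENNReal.ofReal ((n.choose i : ℝ) * r' ^ (n - i)))
        (a := fun _ : ℕ => (0 : ℝ≥0∞)) (Finset.range (K + 1))
        (fun i _ => by simpa using ENNReal.tendsto_ofReal (htend0 i))
      simpa using h2
    exact h1.congr fun n => (heq n).symm
  exact ge_of_tendsto' htend hbound

end POSMG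
end

section
/- (Minimax attainment and interchange; proof of Theorem 3) For every H ∈ F_m and every (t,x,μ) ∈ ℝ₊ × E_X × P(E_Y×ℝ), the map (φ,ψ) ↦ T^{φ,ψ}H(t,x,μ) is continuous on P(A(x)) × P(B(x)) (with the weak topology), the infimum over φ ∈ P(A(x)) and the supremum over ψ ∈ P(B(x)) are both attained, and they can be interchanged: inf_{φ∈P(A(x))} sup_{ψ∈P(B(x))} T^{φ,ψ}H(t,x,μ) = min_{φ∈P(A(x))} max_{ψ∈P(B(x))} T^{φ,ψ}H(t,x,μ) = max_{ψ∈P(B(x))} min_{φ∈P(A(x))} T^{φ,ψ}H(t,x,μ). -/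
/-!
Common framework for finite-horizon partially observable semi-Markov games (POSMGs)
with risk probability criteria, following Wen, Xia, Yu (2025).
-/

open MeasureTheory ProbabilityTheory ENNReal Filter Set

namespace POSMG

lemma alternative {m n : Type*} [Fintype m] [Fintype n] [Nonempty m] [Nonempty n]
    (d : m → n → ℝ) :
    (∃ y ∈ stdSimplex ℝ n, ∀ i, ∑ j, y j * d i j ≤ 0) ∨
    (∃ x ∈ stdSimplex ℝ m, ∀ j, 0 < ∑ i, x i * d i j) := by
  classical
  set Φ : (n → ℝ) →ₗ[ℝ] (m → ℝ) :=
    { toFun := fun y i => ∑ j, y j * d i j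
      map_add' := by
        intro y z; funext i; simp [add_mul, Finset.sum_add_distrib]
      map_smul' := by
        intro r y; funext i; simp [Finset.mul_sum, mul_assoc] } with hΦ
  have hΦapp : ∀ y i, Φ y i = ∑ j, y j * d i j := fun y i => rfl
  set K : Set (m → ℝ) := Φ '' stdSimplex ℝ n with hK
  by_cases hmeet : ∃ z ∈ K, ∀ i, z i ≤ 0
  · left
    obtain ⟨z, ⟨y, hy, rfl⟩, hz⟩ := hmeet
    exact ⟨y, hy, hz⟩
  · right
    set D : Set (m → ℝ) := {z | ∀ i, z i ≤ 0} with hD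
    have hDconv : Convex ℝ D := by
      intro z hz z' hz' a b ha hb hab i
      have := hz i; have := hz' i
      have h1 : a * z i ≤ 0 := mul_nonpos_of_nonneg_of_nonpos ha (hz i)
      have h2 : b * z' i ≤ 0 := mul_nonpos_of_nonneg_of_nonpos hb (hz' i)
      simpa using add_nonpos h1 h2
    have hDclosed : IsClosed D := by
      have : D = ⋂ i, {z : m → ℝ | z i ≤ 0} := Set.setOf_forall _
      rw [this]
      exact isClosed_iInter fun i => isClosed_le (continuous_apply i) continuous_const
    have hΦcont : Continuous Φ := Φ.continuous_of_finiteDimensional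
    have hKcomp : IsCompact K := (isCompact_stdSimplex ℝ n).image hΦcont
    have hKconv : Convex ℝ K := (convex_stdSimplex ℝ n).linear_image Φ
    have hdisj : Disjoint D K := by
      rw [Set.disjoint_left]
      intro z hzD hzK
      exact hmeet ⟨z, hzK, hzD⟩
    obtain ⟨f, u, v, hfd, huv, hfk⟩ :=
      geometric_hahn_banach_closed_compact hDconv hDclosed hKconv hKcomp hdisj
    have hu0 : 0 < u := by
      have h0D : (0 : m → ℝ) ∈ D := fun i => le_refl 0
      have := hfd 0 h0D
      simpa using this
    set e : m → (m → ℝ) := fun i j => if i = j then 1 else 0 with he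
    set x0 : m → ℝ := fun i => f (e i) with hx0
    have hfeval : ∀ z : m → ℝ, f z = ∑ i, z i * x0 i := by
      intro z
      conv_lhs => rw [pi_eq_sum_univ z]
      rw [_root_.map_sum]
      exact Finset.sum_congr rfl fun i _ => by rw [_root_.map_smul]; simp [smul_eq_mul, x0, e]
    have hx0nn : ∀ i, 0 ≤ x0 i := by
      intro i
      by_contra hneg
      push_neg at hneg
      have hR : u / x0 i ≤ 0 := le_of_lt (div_neg_of_pos_of_neg hu0 hneg)
      have hdmem : (u / x0 i) • e i ∈ D := by
        intro j
        simp only [Pi.smul_apply, smul_eq_mul, e]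
        by_cases h : i = j
        · rw [if_pos h, mul_one]; exact hR
        · rw [if_neg h, mul_zero]
      have := hfd _ hdmem
      rw [_root_.map_smul] at this
      simp only [smul_eq_mul] at this
      rw [div_mul_cancel₀ u (ne_of_lt hneg)] at this
      exact lt_irrefl u this
    have hcol : ∀ j, v < ∑ i, d i j * x0 i := by
      intro j
      have hyj : (fun j' => if j = j' then (1:ℝ) else 0) ∈ stdSimplex ℝ n := by
        constructor
        · intro j'; by_cases h : j = j' <;> simp [h]
        · simp
      have hmem : Φ (fun j' => if j = j' then (1:ℝ) else 0) ∈ K := ⟨_, hyj, rfl⟩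
      have := hfk _ hmem
      rw [hfeval] at this
      have hΦval : ∀ i, Φ (fun j' => if j = j' then (1:ℝ) else 0) i = d i j := by
        intro i
        rw [hΦapp]
        simp [ite_mul, one_mul, zero_mul, Finset.sum_ite_eq]
      calc v < ∑ i, Φ (fun j' => if j = j' then (1:ℝ) else 0) i * x0 i := this
        _ = ∑ i, d i j * x0 i := Finset.sum_congr rfl fun i _ => by rw [hΦval]
    have hv0 : 0 < v := lt_trans hu0 huv
    set S : ℝ := ∑ i, x0 i with hS
    have hSpos : 0 < S := by
      rcases (Finset.sum_nonneg fun i _ => hx0nn i).lt_or_eq with h | h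
      · exact h
      · exfalso
        have hall : ∀ i ∈ Finset.univ, x0 i = 0 :=
          (Finset.sum_eq_zero_iff_of_nonneg fun i _ => hx0nn i).1 h.symm
        obtain ⟨j⟩ := ‹Nonempty n›
        have := hcol j
        rw [Finset.sum_congr rfl (fun i _ => by rw [hall i (Finset.mem_univ i), mul_zero])] at this
        simp at this
        linarith
    refine ⟨fun i => x0 i / S, ⟨fun i => div_nonneg (hx0nn i) hSpos.le, ?_⟩, ?_⟩
    · rw [← Finset.sum_div, ← hS, div_self hSpos.ne']
    · intro j
      have : (0:ℝ) < (∑ i, d i j * x0 i) / S := div_pos (lt_trans hv0 (hcol j)) hSpos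
      calc (0:ℝ) < (∑ i, d i j * x0 i) / S := this
        _ = ∑ i, x0 i / S * d i j := by
            rw [Finset.sum_div]
            exact Finset.sum_congr rfl fun i _ => by ring



section MinimaxAux

variable {α β : Type*}

private lemma mixed_sum_le {u : Finset β} (hu : u.Nonempty) {w : β → ℝ}
    (hw : IsMixed u w) (f : β → ℝ) : ∑ b ∈ u, w b * f b ≤ u.sup' hu f :=
  calc ∑ b ∈ u, w b * f b ≤ ∑ b ∈ u, w b * u.sup' hu f :=
        Finset.sum_le_sum fun b hb =>
          mul_le_mul_of_nonneg_left (Finset.le_sup' f hb) (hw.1 b)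
    _ = u.sup' hu f := by rw [← Finset.sum_mul, hw.2.2, one_mul]

private lemma inf'_le_mixed_sum {u : Finset β} (hu : u.Nonempty) {w : β → ℝ}
    (hw : IsMixed u w) (f : β → ℝ) : u.inf' hu f ≤ ∑ b ∈ u, w b * f b :=
  calc u.inf' hu f = ∑ b ∈ u, w b * u.inf' hu f := by
        rw [← Finset.sum_mul, hw.2.2, one_mul]
    _ ≤ ∑ b ∈ u, w b * f b :=
        Finset.sum_le_sum fun b hb =>
          mul_le_mul_of_nonneg_left (Finset.inf'_le f hb) (hw.1 b)

private lemma isMixed_pure [DecidableEq β] {u : Finset β} {b0 : β} (hb0 : b0 ∈ u) :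
    IsMixed u (fun b => if b = b0 then (1:ℝ) else 0) := by
  refine ⟨fun b => by by_cases h : b = b0 <;> simp [h], fun b hb => ?_, ?_⟩
  · have : b ≠ b0 := fun h => hb (h ▸ hb0)
    simp [this]
  · simp [Finset.sum_ite_eq', hb0]

private lemma pure_sum [DecidableEq β] {u : Finset β} {b0 : β} (hb0 : b0 ∈ u) (f : β → ℝ) :
    ∑ b ∈ u, (if b = b0 then (1:ℝ) else 0) * f b = f b0 := by
  simp [ite_mul, Finset.sum_ite_eq', hb0]

private lemma continuous_sup' {X : Type*} [TopologicalSpace X] :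
    ∀ {u : Finset β} (hu : u.Nonempty) {f : β → X → ℝ},
      (∀ b ∈ u, Continuous (f b)) → Continuous fun w => u.sup' hu fun b => f b w := by
  intro u hu
  induction hu using Finset.Nonempty.cons_induction with
  | singleton a => intro f hf; simpa using hf a (by simp)
  | cons a u ha hu ih =>
    intro f hf
    simp only [Finset.sup'_cons hu]
    exact (hf a (by simp)).sup (ih fun b hb => hf b (by simp [hb]))

private lemma continuous_inf' {X : Type*} [TopologicalSpace X] :
    ∀ {u : Finset β} (hu : u.Nonempty) {f : β → X → ℝ},
      (∀ b ∈ u, Continuous (f b)) → Continuous fun w => u.inf' hu fun b => f b w := by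
  intro u hu
  induction hu using Finset.Nonempty.cons_induction with
  | singleton a => intro f hf; simpa using hf a (by simp)
  | cons a u ha hu ih =>
    intro f hf
    simp only [Finset.inf'_cons hu]
    exact (hf a (by simp)).inf (ih fun b hb => hf b (by simp [hb]))

private lemma isCompact_mixedSet (s : Finset α) : IsCompact {w : α → ℝ | IsMixed s w} := by
  classical
  have hbox : IsCompact (Set.univ.pi fun a : α => if a ∈ s then Set.Icc (0:ℝ) 1 else {0}) :=
    isCompact_univ_pi fun a => by
      by_cases h : a ∈ s
      · rw [if_pos h]; exact isCompact_Icc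
      · rw [if_neg h]; exact isCompact_singleton
  refine hbox.of_isClosed_subset ?_ ?_
  · have hset : {w : α → ℝ | IsMixed s w}
        = (⋂ a, {w : α → ℝ | 0 ≤ w a}) ∩
          ((⋂ a, {w : α → ℝ | a ∉ s → w a = 0}) ∩ {w : α → ℝ | ∑ a ∈ s, w a = 1}) := by
      ext w
      simp only [Set.mem_setOf_eq, Set.mem_inter_iff, Set.mem_iInter, IsMixed]
    rw [hset]
    refine (isClosed_iInter fun a =>
        isClosed_le continuous_const (continuous_apply a)).inter (IsClosed.inter ?_ ?_)
    · refine isClosed_iInter fun a => ?_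
      by_cases h : a ∈ s
      · have : {w : α → ℝ | a ∉ s → w a = 0} = Set.univ := by ext w; simp [h]
        rw [this]; exact isClosed_univ
      · have : {w : α → ℝ | a ∉ s → w a = 0} = {w : α → ℝ | w a = 0} := by ext w; simp [h]
        rw [this]; exact isClosed_eq (continuous_apply a) continuous_const
    · exact isClosed_eq (continuous_finset_sum _ fun a _ => continuous_apply a) continuous_const
  · intro w hw
    rw [Set.mem_univ_pi]
    intro a
    by_cases h : a ∈ s
    · rw [if_pos h]
      exact ⟨hw.1 a, by rw [← hw.2.2]; exact Finset.single_le_sum (fun i _ => hw.1 i) h⟩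
    · rw [if_neg h]
      exact hw.2.1 a h

open Classical in
private lemma mixed_ext {γ : Type*} (u : Finset γ) (y : {x // x ∈ u} → ℝ)
    (hy : y ∈ stdSimplex ℝ {x // x ∈ u}) :
    IsMixed u (fun a => if h : a ∈ u then y ⟨a, h⟩ else 0) ∧
    ∀ g : γ → ℝ, ∑ a ∈ u, (if h : a ∈ u then y ⟨a, h⟩ else 0) * g a
        = ∑ a : {x // x ∈ u}, y a * g ↑a := by
  classical
  have hval : ∀ a : {x // x ∈ u}, (if h : (a : γ) ∈ u then y ⟨a, h⟩ else 0) = y a := by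
    intro a; rw [dif_pos a.2]
  have hsum : ∀ g : γ → ℝ, ∑ a ∈ u, (if h : a ∈ u then y ⟨a, h⟩ else 0) * g a
      = ∑ a : {x // x ∈ u}, y a * g ↑a := by
    intro g
    rw [← Finset.sum_coe_sort u (fun a => (if h : a ∈ u then y ⟨a, h⟩ else 0) * g a)]
    exact Finset.sum_congr rfl fun a _ => by rw [hval a]
  refine ⟨⟨fun a => ?_, fun a ha => dif_neg ha, ?_⟩, hsum⟩
  · dsimp only
    by_cases h : a ∈ u
    · rw [dif_pos h]; exact hy.1 _
    · rw [dif_neg h]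
  · have h1 := hsum (fun _ => 1)
    simp only [mul_one] at h1
    dsimp only
    rw [h1]
    exact hy.2

private theorem mixed_minimax {α β : Type*} (s : Finset α) (t : Finset β)
    (hs : s.Nonempty) (ht : t.Nonempty) (c : α → β → ℝ)
    (P : Mixed s → Mixed t → ℝ)
    (hP : ∀ w1 w2, P w1 w2 = ∑ a ∈ s, ∑ b ∈ t, w1.1 a * w2.1 b * c a b) :
    Continuous (fun w : Mixed s × Mixed t => P w.1 w.2) ∧
    (∀ w1, ∃ w2, P w1 w2 = ⨆ w2', P w1 w2') ∧
    (∀ w2, ∃ w1, P w1 w2 = ⨅ w1', P w1' w2) ∧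
    (∃ w1, (⨆ w2, P w1 w2) = ⨅ w1', ⨆ w2, P w1' w2) ∧
    (∃ w2, (⨅ w1, P w1 w2) = ⨆ w2', ⨅ w1, P w1 w2') ∧
    (⨅ w1, ⨆ w2, P w1 w2) = ⨆ w2, ⨅ w1, P w1 w2 := by
  classical
  haveI : Nonempty (Mixed s) := ⟨⟨_, isMixed_pure hs.choose_spec⟩⟩
  haveI : Nonempty (Mixed t) := ⟨⟨_, isMixed_pure ht.choose_spec⟩⟩
  set L1 : (α → ℝ) → β → ℝ := fun w b => ∑ a ∈ s, w a * c a b with hL1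
  set L2 : (β → ℝ) → α → ℝ := fun w a => ∑ b ∈ t, w b * c a b with hL2
  set G : (α → ℝ) → ℝ := fun w => t.sup' ht (L1 w) with hG
  set F : (β → ℝ) → ℝ := fun w => s.inf' hs (L2 w) with hF
  have hright : ∀ (w1 : α → ℝ) (w2 : β → ℝ),
      ∑ a ∈ s, ∑ b ∈ t, w1 a * w2 b * c a b = ∑ b ∈ t, w2 b * L1 w1 b := by
    intro w1 w2
    rw [Finset.sum_comm]
    refine Finset.sum_congr rfl fun b _ => ?_
    rw [Finset.mul_sum]
    exact Finset.sum_congr rfl fun a _ => by ring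
  have hleft : ∀ (w1 : α → ℝ) (w2 : β → ℝ),
      ∑ a ∈ s, ∑ b ∈ t, w1 a * w2 b * c a b = ∑ a ∈ s, w1 a * L2 w2 a := by
    intro w1 w2
    refine Finset.sum_congr rfl fun a _ => ?_
    rw [Finset.mul_sum]
    exact Finset.sum_congr rfl fun b _ => by ring
  have hPle : ∀ (w1 : Mixed s) (w2 : Mixed t), P w1 w2 ≤ G w1.1 := by
    intro w1 w2
    rw [hP, hright]
    exact mixed_sum_le ht w2.2 (L1 w1.1)
  have hPge : ∀ (w1 : Mixed s) (w2 : Mixed t), F w2.1 ≤ P w1 w2 := by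
    intro w1 w2
    rw [hP, hleft]
    exact inf'_le_mixed_sum hs w1.2 (L2 w2.1)
  have supP : ∀ w1 : Mixed s, (⨆ w2 : Mixed t, P w1 w2) = G w1.1 := by
    intro w1
    refine le_antisymm (ciSup_le fun w2 => hPle w1 w2) ?_
    obtain ⟨b0, hb0, hb0eq⟩ := t.exists_mem_eq_sup' ht (L1 w1.1)
    have hpure : P w1 ⟨fun b => if b = b0 then 1 else 0, isMixed_pure hb0⟩ = L1 w1.1 b0 := by
      rw [hP, hright]; exact pure_sum hb0 (L1 w1.1)
    rw [hG]
    simp only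
    rw [hb0eq, ← hpure]
    exact le_ciSup ⟨G w1.1, by rintro _ ⟨w2', rfl⟩; exact hPle w1 w2'⟩ _
  have infP : ∀ w2 : Mixed t, (⨅ w1 : Mixed s, P w1 w2) = F w2.1 := by
    intro w2
    refine le_antisymm ?_ (le_ciInf fun w1 => hPge w1 w2)
    obtain ⟨a0, ha0, ha0eq⟩ := s.exists_mem_eq_inf' hs (L2 w2.1)
    have hpure : P ⟨fun a => if a = a0 then 1 else 0, isMixed_pure ha0⟩ w2 = L2 w2.1 a0 := by
      rw [hP, hleft]; exact pure_sum ha0 (L2 w2.1)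
    rw [hF]
    simp only
    rw [ha0eq, ← hpure]
    exact ciInf_le ⟨F w2.1, by rintro _ ⟨w1', rfl⟩; exact hPge w1' w2⟩ _
  have hGcont : Continuous G :=
    continuous_sup' ht fun b _ =>
      continuous_finset_sum _ fun a _ => (continuous_apply a).mul continuous_const
  have hFcont : Continuous F :=
    continuous_inf' hs fun a _ =>
      continuous_finset_sum _ fun b _ => (continuous_apply b).mul continuous_const
  obtain ⟨x0, hx0mem, hx0min⟩ :=
    (isCompact_mixedSet s).exists_isMinOn ⟨_, isMixed_pure hs.choose_spec⟩ hGcont.continuousOn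
  obtain ⟨y0, hy0mem, hy0max⟩ :=
    (isCompact_mixedSet t).exists_isMaxOn ⟨_, isMixed_pure ht.choose_spec⟩ hFcont.continuousOn
  have hmin : ∀ w : Mixed s, G x0 ≤ G w.1 := fun w => isMinOn_iff.1 hx0min w.1 w.2
  have hmax : ∀ w : Mixed t, F w.1 ≤ F y0 := fun w => isMaxOn_iff.1 hy0max w.1 w.2
  set X0 : Mixed s := ⟨x0, hx0mem⟩ with hX0
  set Y0 : Mixed t := ⟨y0, hy0mem⟩ with hY0
  have hinfG : (⨅ w1 : Mixed s, G w1.1) = G x0 :=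
    le_antisymm (ciInf_le ⟨G x0, by rintro _ ⟨w, rfl⟩; exact hmin w⟩ X0)
      (le_ciInf fun w => hmin w)
  have hsupF : (⨆ w2 : Mixed t, F w2.1) = F y0 :=
    le_antisymm (ciSup_le fun w => hmax w)
      (le_ciSup ⟨F y0, by rintro _ ⟨w, rfl⟩; exact hmax w⟩ Y0)
  -- mixed extension of a simplex point
  haveI : Nonempty {a // a ∈ s} := hs.to_subtype
  haveI : Nonempty {b // b ∈ t} := ht.to_subtype
  -- the minimax equality for the values G x0 = F y0
  have hkey : G x0 = F y0 := by
    refine le_antisymm ?_ (le_trans (hPge X0 Y0) (hPle X0 Y0))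
    by_contra hlt
    push_neg at hlt
    set v : ℝ := (F y0 + G x0) / 2 with hv
    have hv1 : F y0 < v := by rw [hv]; linarith
    have hv2 : v < G x0 := by rw [hv]; linarith
    rcases alternative (fun (b : {x // x ∈ t}) (a : {x // x ∈ s}) => c ↑a ↑b - v) with
      ⟨y, hy, hle⟩ | ⟨x, hx, hpos⟩
    · -- player 1 has a mixed strategy guaranteeing ≤ v : contradicts v < G x0
      obtain ⟨hwmix, hwsum⟩ := mixed_ext s y hy
      set w : α → ℝ := fun a => if h : a ∈ s then y ⟨a, h⟩ else 0 with hw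
      have hGw : G w ≤ v := by
        refine Finset.sup'_le ht _ fun b hb => ?_
        have h1 := hle ⟨b, hb⟩
        have h2 : ∑ a : {x // x ∈ s}, y a * (c ↑a b - v)
            = (∑ a : {x // x ∈ s}, y a * c ↑a b) - v := by
          calc ∑ a : {x // x ∈ s}, y a * (c ↑a b - v)
              = ∑ a : {x // x ∈ s}, (y a * c ↑a b - y a * v) :=
                Finset.sum_congr rfl fun a _ => by ring
            _ = (∑ a : {x // x ∈ s}, y a * c ↑a b) - ∑ a : {x // x ∈ s}, y a * v :=
                Finset.sum_sub_distrib _ _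
            _ = (∑ a : {x // x ∈ s}, y a * c ↑a b) - v := by
                rw [← Finset.sum_mul, hy.2, one_mul]
        have h3 : L1 w b = ∑ a : {x // x ∈ s}, y a * c ↑a b := hwsum (fun a => c a b)
        rw [h3]
        rw [h2] at h1
        linarith
      have := hmin ⟨w, hwmix⟩
      simp only at this
      linarith
    · -- player 2 has a mixed strategy guaranteeing ≥ v : contradicts F y0 < v
      obtain ⟨hwmix, hwsum⟩ := mixed_ext t x hx
      set w : β → ℝ := fun b => if h : b ∈ t then x ⟨b, h⟩ else 0 with hw
      have hFw : v ≤ F w := by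
        refine Finset.le_inf' hs _ fun a ha => ?_
        have h1 := hpos ⟨a, ha⟩
        have h2 : ∑ b : {x // x ∈ t}, x b * (c a ↑b - v)
            = (∑ b : {x // x ∈ t}, x b * c a ↑b) - v := by
          calc ∑ b : {x // x ∈ t}, x b * (c a ↑b - v)
              = ∑ b : {x // x ∈ t}, (x b * c a ↑b - x b * v) :=
                Finset.sum_congr rfl fun b _ => by ring
            _ = (∑ b : {x // x ∈ t}, x b * c a ↑b) - ∑ b : {x // x ∈ t}, x b * v :=
                Finset.sum_sub_distrib _ _
            _ = (∑ b : {x // x ∈ t}, x b * c a ↑b) - v := by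
                rw [← Finset.sum_mul, hx.2, one_mul]
        have h3 : L2 w a = ∑ b : {x // x ∈ t}, x b * c a ↑b := hwsum (fun b => c a b)
        rw [h3]
        rw [h2] at h1
        linarith
      have := hmax ⟨w, hwmix⟩
      simp only at this
      linarith
  refine ⟨?_, ?_, ?_, ?_, ?_, ?_⟩
  · have heq : (fun w : Mixed s × Mixed t => P w.1 w.2)
        = fun w => ∑ a ∈ s, ∑ b ∈ t, w.1.1 a * w.2.1 b * c a b :=
      funext fun w => hP w.1 w.2
    rw [heq]
    refine continuous_finset_sum _ fun a _ => continuous_finset_sum _ fun b _ => ?_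
    exact (((continuous_apply a).comp (continuous_subtype_val.comp continuous_fst)).mul
      ((continuous_apply b).comp (continuous_subtype_val.comp continuous_snd))).mul
      continuous_const
  · intro w1
    obtain ⟨b0, hb0, hb0eq⟩ := t.exists_mem_eq_sup' ht (L1 w1.1)
    refine ⟨⟨fun b => if b = b0 then 1 else 0, isMixed_pure hb0⟩, ?_⟩
    rw [supP w1, hP, hright]
    rw [pure_sum hb0 (L1 w1.1)]
    exact hb0eq.symm
  · intro w2
    obtain ⟨a0, ha0, ha0eq⟩ := s.exists_mem_eq_inf' hs (L2 w2.1)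
    refine ⟨⟨fun a => if a = a0 then 1 else 0, isMixed_pure ha0⟩, ?_⟩
    rw [infP w2, hP, hleft]
    rw [pure_sum ha0 (L2 w2.1)]
    exact ha0eq.symm
  · refine ⟨X0, ?_⟩
    rw [supP X0, iInf_congr supP, hinfG]
  · refine ⟨Y0, ?_⟩
    rw [infP Y0, iSup_congr infP, hsupF]
  · rw [iInf_congr supP, iSup_congr infP, hinfG, hsupF, hkey]

end MinimaxAux

/-- **Minimax attainment and interchange.** For every `H ∈ 𝓕_m` and every `(t,x,μ)`,
the map `(φ,ψ) ↦ T^{φ,ψ}H(t,x,μ)` is continuous on `P(A(x)) × P(B(x))`, the infimum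
and supremum are attained, and `inf sup = sup inf`. -/
theorem minimax_attained_and_interchange
    {EX EY Act1 Act2 : Type*} [MeasurableSpace EX] [MeasurableSpace EY]
    [MeasurableSpace Act1] [MeasurableSpace Act2]
    [StandardBorelSpace EX] [StandardBorelSpace EY]
    [StandardBorelSpace Act1] [StandardBorelSpace Act2]
    (M : Model EX EY Act1 Act2)
    (H : ℝ → EX → Measure (EY × ℝ) → ℝ) (hH : MemFm H)
    (t : ℝ) (x : EX) (μ : Measure (EY × ℝ)) (ht : 0 ≤ t) (hμ : IsProbabilityMeasure μ) :
    Continuous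
      (fun w : Mixed (M.Aset x) × Mixed (M.Bset x) => M.Tmix H w.1.1 w.2.1 t x μ) ∧
    (∀ w1 : Mixed (M.Aset x), ∃ w2 : Mixed (M.Bset x),
        M.Tmix H w1.1 w2.1 t x μ = ⨆ w2' : Mixed (M.Bset x), M.Tmix H w1.1 w2'.1 t x μ) ∧
    (∀ w2 : Mixed (M.Bset x), ∃ w1 : Mixed (M.Aset x),
        M.Tmix H w1.1 w2.1 t x μ = ⨅ w1' : Mixed (M.Aset x), M.Tmix H w1'.1 w2.1 t x μ) ∧
    (∃ w1 : Mixed (M.Aset x),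
        (⨆ w2 : Mixed (M.Bset x), M.Tmix H w1.1 w2.1 t x μ)
          = ⨅ w1' : Mixed (M.Aset x), ⨆ w2 : Mixed (M.Bset x), M.Tmix H w1'.1 w2.1 t x μ) ∧
    (∃ w2 : Mixed (M.Bset x),
        (⨅ w1 : Mixed (M.Aset x), M.Tmix H w1.1 w2.1 t x μ)
          = ⨆ w2' : Mixed (M.Bset x), ⨅ w1 : Mixed (M.Aset x), M.Tmix H w1.1 w2'.1 t x μ) ∧
    (⨅ w1 : Mixed (M.Aset x), ⨆ w2 : Mixed (M.Bset x), M.Tmix H w1.1 w2.1 t x μ)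
      = ⨆ w2 : Mixed (M.Bset x), ⨅ w1 : Mixed (M.Aset x), M.Tmix H w1.1 w2.1 t x μ :=
  mixed_minimax (M.Aset x) (M.Bset x) (M.hA x) (M.hB x) _
    (fun w1 w2 => M.Tmix H w1.1 w2.1 t x μ) (fun _ _ => rfl)

end POSMG
end
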